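/- Let V be a finite set of unit vectors in ℝⁿ such that for all distinct v,w ∈ V, |⟨v,w⟩| ∈ {0, α} for a fixed real α with 0 < α < 1, and suppose 3 − (n+2)α² > 0. Then |V| ≤ n(n+2)(1−α²)/(3−(n+2)α²). -/
import Mathlib


open scoped InnerProductSpace

open Finset

lemma sum_ite_out {α : Type*} (s : Finset α) {P : Prop} [Decidable P] (f : α → ℝ) :
    ∑ x ∈ s, (if P then f x else 0) = if P then ∑ x ∈ s, f x else 0 := by
  split <;> simp

lemma fact2 {n : ℕ} (f g : Fin n → ℝ) (F : Fin n → Fin n → ℝ)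
    (h : ∀ a b, F a b = f a * g b) :
    ∑ a : Fin n, ∑ b, F a b = (∑ a, f a) * (∑ b, g b) := by
  simp only [h]; rw [← Finset.sum_mul_sum]


lemma fact3 {n : ℕ} (f g h : Fin n → ℝ) (F : Fin n → Fin n → Fin n → ℝ)
    (hF : ∀ a b c, F a b c = f a * g b * h c) :
    ∑ a : Fin n, ∑ b, ∑ c, F a b c = (∑ a, f a) * (∑ b, g b) * (∑ c, h c) := by
  simp only [hF]
  rw [mul_assoc, Finset.sum_mul_sum, Finset.sum_mul_sum]
  apply Finset.sum_congr rfl; intro a _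
  apply Finset.sum_congr rfl; intro b _
  rw [Finset.mul_sum]
  apply Finset.sum_congr rfl; intro c _
  ring

noncomputable def dd {n : ℕ} (i j : Fin n) : ℝ := if i = j then 1 else 0

noncomputable def TT {n : ℕ} (x : Fin n → ℝ) (i j k l : Fin n) : ℝ := x i * x j * x k * x l

noncomputable def PP {n : ℕ} (x : Fin n → ℝ) (i j k l : Fin n) : ℝ :=
  dd i j * (x k * x l) + dd k l * (x i * x j) + dd i k * (x j * x l)
  + dd j l * (x i * x k) + dd i l * (x j * x k) + dd j k * (x i * x l)

noncomputable def SS {n : ℕ} (i j k l : Fin n) : ℝ :=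
  dd i j * dd k l + dd i k * dd j l + dd i l * dd j k

section
variable {n : ℕ} (x y : Fin n → ℝ)

lemma LTT : ∑ i : Fin n, ∑ j, ∑ k, ∑ l, TT x i j k l * TT y i j k l
    = (∑ i, x i * y i)^4 := by
  rw [show ((∑ i, x i * y i)^4) = (∑ i, x i * y i)*(∑ i, x i * y i)*(∑ i, x i * y i)*(∑ i, x i * y i) by ring]
  simp only [Finset.sum_mul_sum, Finset.sum_mul, Finset.mul_sum]
  apply Finset.sum_congr rfl; intro i _
  apply Finset.sum_congr rfl; intro j _
  apply Finset.sum_congr rfl; intro k _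
  apply Finset.sum_congr rfl; intro l _
  simp [TT]; ring

lemma LTS (hx : ∑ i, x i * x i = 1) :
    ∑ i : Fin n, ∑ j, ∑ k, ∑ l, TT x i j k l * SS i j k l = 3 := by
  simp only [TT, SS, dd, add_mul, mul_add, ite_mul, mul_ite, mul_zero, zero_mul, one_mul, mul_one,
    Finset.sum_add_distrib, sum_ite_out, Finset.sum_ite_eq, Finset.sum_ite_eq', Finset.mem_univ, if_true,
    Finset.sum_const, Finset.card_univ, Fintype.card_fin, nsmul_eq_mul]
  rw [fact2 (fun a => x a * x a) (fun b => x b * x b) (fun a b => x a * x a * x b * x b) (by intros; ring),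
      fact2 (fun a => x a * x a) (fun b => x b * x b) (fun a b => x a * x b * x a * x b) (by intros; ring),
      fact2 (fun a => x a * x a) (fun b => x b * x b) (fun a b => x a * x b * x b * x a) (by intros; ring),
      hx]
  norm_num

lemma LST (hy : ∑ i, y i * y i = 1) :
    ∑ i : Fin n, ∑ j, ∑ k, ∑ l, SS i j k l * TT y i j k l = 3 := by
  simp only [TT, SS, dd, add_mul, mul_add, ite_mul, mul_ite, mul_zero, zero_mul, one_mul, mul_one,
    Finset.sum_add_distrib, sum_ite_out, Finset.sum_ite_eq, Finset.sum_ite_eq', Finset.mem_univ, if_true,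
    Finset.sum_const, Finset.card_univ, Fintype.card_fin, nsmul_eq_mul]
  rw [fact2 (fun a => y a * y a) (fun b => y b * y b) (fun a b => y a * y a * y b * y b) (by intros; ring),
      fact2 (fun a => y a * y a) (fun b => y b * y b) (fun a b => y a * y b * y a * y b) (by intros; ring),
      fact2 (fun a => y a * y a) (fun b => y b * y b) (fun a b => y a * y b * y b * y a) (by intros; ring),
      hy]
  norm_num

lemma LSS : ∑ i : Fin n, ∑ j, ∑ k, ∑ l, SS i j k l * SS i j k l = 3*(n:ℝ)^2 + 6*n := by
  simp only [SS, dd, add_mul, mul_add, ite_mul, mul_ite, mul_zero, zero_mul, one_mul, mul_one,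
    Finset.sum_add_distrib, sum_ite_out, Finset.sum_ite_eq, Finset.sum_ite_eq', Finset.mem_univ, if_true,
    Finset.sum_const, Finset.card_univ, Fintype.card_fin, nsmul_eq_mul, mul_one]
  ring

lemma LPS (hx : ∑ i, x i * x i = 1) :
    ∑ i : Fin n, ∑ j, ∑ k, ∑ l, PP x i j k l * SS i j k l = 6*(n:ℝ) + 12 := by
  simp only [PP, SS, dd, add_mul, mul_add, ite_mul, mul_ite, mul_zero, zero_mul, one_mul, mul_one,
    Finset.sum_add_distrib, sum_ite_out, Finset.sum_ite_eq, Finset.sum_ite_eq', Finset.mem_univ, if_true,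
    Finset.sum_const, Finset.card_univ, Fintype.card_fin, nsmul_eq_mul]
  simp only [← Finset.mul_sum, hx]
  ring

lemma LSP (hy : ∑ i, y i * y i = 1) :
    ∑ i : Fin n, ∑ j, ∑ k, ∑ l, SS i j k l * PP y i j k l = 6*(n:ℝ) + 12 := by
  simp only [PP, SS, dd, add_mul, mul_add, ite_mul, mul_ite, mul_zero, zero_mul, one_mul, mul_one,
    Finset.sum_add_distrib, sum_ite_out, Finset.sum_ite_eq, Finset.sum_ite_eq', Finset.mem_univ, if_true,
    Finset.sum_const, Finset.card_univ, Fintype.card_fin, nsmul_eq_mul]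
  simp only [← Finset.mul_sum, hy]
  ring

lemma LTP (hx : ∑ i, x i * x i = 1) :
    ∑ i : Fin n, ∑ j, ∑ k, ∑ l, TT x i j k l * PP y i j k l = 6*(∑ i, x i * y i)^2 := by
  simp only [TT, PP, dd, add_mul, mul_add, ite_mul, mul_ite, mul_zero, zero_mul, one_mul, mul_one,
    Finset.sum_add_distrib, sum_ite_out, Finset.sum_ite_eq, Finset.sum_ite_eq', Finset.mem_univ, if_true,
    Finset.sum_const, Finset.card_univ, Fintype.card_fin, nsmul_eq_mul]
  rw [fact3 (fun a => x a * x a) (fun b => x b * y b) (fun c => x c * y c) (fun a b c => x a * x a * x b * x c * (y b * y c)) (by intros; ring),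
      fact3 (fun a => x a * y a) (fun b => x b * y b) (fun c => x c * x c) (fun a b c => x a * x b * x c * x c * (y a * y b)) (by intros; ring),
      fact3 (fun a => x a * x a) (fun b => x b * y b) (fun c => x c * y c) (fun a b c => x a * x b * x a * x c * (y b * y c)) (by intros; ring),
      fact3 (fun a => x a * y a) (fun b => x b * x b) (fun c => x c * y c) (fun a b c => x a * x b * x c * x b * (y a * y c)) (by intros; ring),
      fact3 (fun a => x a * x a) (fun b => x b * y b) (fun c => x c * y c) (fun a b c => x a * x b * x c * x a * (y b * y c)) (by intros; ring),
      fact3 (fun a => x a * y a) (fun b => x b * x b) (fun c => x c * y c) (fun a b c => x a * x b * x b * x c * (y a * y c)) (by intros; ring),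
      hx]
  ring

lemma LPT (hy : ∑ i, y i * y i = 1) :
    ∑ i : Fin n, ∑ j, ∑ k, ∑ l, PP x i j k l * TT y i j k l = 6*(∑ i, x i * y i)^2 := by
  simp only [TT, PP, dd, add_mul, mul_add, ite_mul, mul_ite, mul_zero, zero_mul, one_mul, mul_one,
    Finset.sum_add_distrib, sum_ite_out, Finset.sum_ite_eq, Finset.sum_ite_eq', Finset.mem_univ, if_true,
    Finset.sum_const, Finset.card_univ, Fintype.card_fin, nsmul_eq_mul]
  rw [fact3 (fun a => y a * y a) (fun b => x b * y b) (fun c => x c * y c) (fun a b c => x b * x c * (y a * y a * y b * y c)) (by intros; ring),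
      fact3 (fun a => x a * y a) (fun b => x b * y b) (fun c => y c * y c) (fun a b c => x a * x b * (y a * y b * y c * y c)) (by intros; ring),
      fact3 (fun a => y a * y a) (fun b => x b * y b) (fun c => x c * y c) (fun a b c => x b * x c * (y a * y b * y a * y c)) (by intros; ring),
      fact3 (fun a => x a * y a) (fun b => y b * y b) (fun c => x c * y c) (fun a b c => x a * x c * (y a * y b * y c * y b)) (by intros; ring),
      fact3 (fun a => y a * y a) (fun b => x b * y b) (fun c => x c * y c) (fun a b c => x b * x c * (y a * y b * y c * y a)) (by intros; ring),
      fact3 (fun a => x a * y a) (fun b => y b * y b) (fun c => x c * y c) (fun a b c => x a * x c * (y a * y b * y b * y c)) (by intros; ring),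
      hy]
  ring

lemma LPP (hx : ∑ i, x i * x i = 1) (hy : ∑ i, y i * y i = 1) :
    ∑ i : Fin n, ∑ j, ∑ k, ∑ l, PP x i j k l * PP y i j k l
      = 6*((n:ℝ)+4)*(∑ i, x i * y i)^2 + 6 := by
  simp only [PP, dd, add_mul, mul_add, ite_mul, mul_ite, mul_zero, zero_mul, one_mul, mul_one,
    Finset.sum_add_distrib, sum_ite_out, Finset.sum_ite_eq, Finset.sum_ite_eq', Finset.mem_univ, if_true,
    Finset.sum_const, Finset.card_univ, Fintype.card_fin, nsmul_eq_mul]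
  simp only [← Finset.mul_sum]
  have P1 := fact2 (fun a => x a * y a) (fun b => x b * y b) (fun a b => x a * x b * (y a * y b)) (by intros; ring)
  have P2 := fact2 (fun a => x a * x a) (fun b => y b * y b) (fun a b => x a * x a * (y b * y b)) (by intros; ring)
  have P3 := fact2 (fun a => x a * y a) (fun b => x b * y b) (fun a b => x a * x b * (y b * y a)) (by intros; ring)
  have P4 := fact2 (fun a => y a * y a) (fun b => x b * x b) (fun a b => x b * x b * (y a * y a)) (by intros; ring)
  have P5 := fact2 (fun a => x a * y a) (fun b => x b * y b) (fun a b => x b * x a * (y a * y b)) (by intros; ring)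
  have P6 := fact2 (fun a => x a * y a) (fun b => x b * y b) (fun a b => x b * x a * (y b * y a)) (by intros; ring)
  simp only [P1, P2, P3, P4, P5, P6, hx, hy]
  simp only [mul_one, hx, hy]
  ring

lemma ker4 (a b c : ℝ) (hx : ∑ i, x i * x i = 1) (hy : ∑ i, y i * y i = 1) :
    ∑ i : Fin n, ∑ j, ∑ k, ∑ l,
      (a * TT x i j k l + b * PP x i j k l + c * SS i j k l) *
      (a * TT y i j k l + b * PP y i j k l + c * SS i j k l)
    = a^2*(∑ i, x i * y i)^4 + (12*a*b + 6*b^2*((n:ℝ)+4))*(∑ i, x i * y i)^2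
      + (6*a*c + 6*b^2 + 12*b*c*((n:ℝ)+2) + 3*c^2*(n:ℝ)*((n:ℝ)+2)) := by
  have e : ∀ i j k l : Fin n,
      (a * TT x i j k l + b * PP x i j k l + c * SS i j k l) *
      (a * TT y i j k l + b * PP y i j k l + c * SS i j k l)
    = a*a*(TT x i j k l * TT y i j k l) + a*b*(TT x i j k l * PP y i j k l)
      + a*c*(TT x i j k l * SS i j k l) + b*a*(PP x i j k l * TT y i j k l)
      + b*b*(PP x i j k l * PP y i j k l) + b*c*(PP x i j k l * SS i j k l)
      + c*a*(SS i j k l * TT y i j k l) + c*b*(SS i j k l * PP y i j k l)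
      + c*c*(SS i j k l * SS i j k l) := by intros; ring
  simp only [e, Finset.sum_add_distrib, ← Finset.mul_sum]
  rw [LTT x y, LTP x y hx, LPT x y hy, LTS x hx, LST y hy, LPP x y hx hy,
    LPS x hx, LSP y hy, LSS]
  ring

lemma ker2 (a c : ℝ) (hx : ∑ i, x i * x i = 1) (hy : ∑ i, y i * y i = 1) :
    ∑ i : Fin n, ∑ j,
      (a * (x i * x j) + c * dd i j) * (a * (y i * y j) + c * dd i j)
    = a^2*(∑ i, x i * y i)^2 + 2*a*c + c^2*(n:ℝ) := by
  simp only [dd, add_mul, mul_add, ite_mul, mul_ite, mul_zero, zero_mul, one_mul, mul_one,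
    Finset.sum_add_distrib, sum_ite_out, Finset.sum_ite_eq, Finset.sum_ite_eq', Finset.mem_univ, if_true,
    Finset.sum_const, Finset.card_univ, Fintype.card_fin, nsmul_eq_mul]
  rw [fact2 (fun i => a*(x i * y i)) (fun j => a*(x j * y j))
      (fun i j => a * (x i * x j) * (a * (y i * y j))) (by intros; ring)]
  simp only [← Finset.sum_mul, ← Finset.mul_sum, hx, hy]
  ring

end

lemma swap_sq {α ι : Type*} [Fintype ι] (s : Finset α) (f : α → ι → ℝ) :
    0 ≤ ∑ v ∈ s, ∑ w ∈ s, ∑ p : ι, f v p * f w p := by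
  have h : ∑ v ∈ s, ∑ w ∈ s, ∑ p : ι, f v p * f w p = ∑ p : ι, (∑ v ∈ s, f v p)^2 := by
    have e : ∀ p : ι, (∑ v ∈ s, f v p)^2 = ∑ v ∈ s, ∑ w ∈ s, f v p * f w p := by
      intro p; rw [sq, Finset.sum_mul_sum]
    calc ∑ v ∈ s, ∑ w ∈ s, ∑ p : ι, f v p * f w p
        = ∑ v ∈ s, ∑ p : ι, ∑ w ∈ s, f v p * f w p :=
          Finset.sum_congr rfl fun v _ => Finset.sum_comm
      _ = ∑ p : ι, ∑ v ∈ s, ∑ w ∈ s, f v p * f w p := Finset.sum_comm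
      _ = ∑ p : ι, (∑ v ∈ s, f v p)^2 := Finset.sum_congr rfl fun p _ => (e p).symm
  rw [h]
  exact Finset.sum_nonneg fun p _ => sq_nonneg _

set_option maxHeartbeats 1000000 in
theorem stmt_6 {n : ℕ} (α : ℝ) (hα : 0 < α) (hα1 : α < 1)
    (V : Finset (EuclideanSpace ℝ (Fin n)))
    (hunit : ∀ v ∈ V, ‖v‖ = 1)
    (hangle : ∀ v ∈ V, ∀ w ∈ V, v ≠ w →
      |⟪v, w⟫_ℝ| = 0 ∨ |⟪v, w⟫_ℝ| = α)
    (hden : 0 < 3 - (n + 2) * α ^ 2) :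
    (V.card : ℝ) ≤ n * (n + 2) * (1 - α ^ 2) / (3 - (n + 2) * α ^ 2) := by
  classical
  have hsq1 : α ^ 2 < 1 := by nlinarith
  rcases Nat.eq_zero_or_pos n with hn | hn
  · subst hn
    have hV : V = ∅ := by
      rw [Finset.eq_empty_iff_forall_notMem]
      intro v hv
      have h1 := hunit v hv
      have h2 : v = 0 := Subsingleton.elim v 0
      rw [h2, norm_zero] at h1
      norm_num at h1
    rw [hV]
    norm_num
  · have hn1 : (1:ℝ) ≤ n := by exact_mod_cast hn
    have hnpos : (0:ℝ) < n := by linarith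
    have hinner : ∀ v w : EuclideanSpace ℝ (Fin n), ⟪v, w⟫_ℝ = ∑ i, v i * w i := by
      intro v w
      simp [PiLp.inner_apply, RCLike.inner_apply, mul_comm]
    have hxv : ∀ v ∈ V, ∑ i, v i * v i = 1 := by
      intro v hv
      have h1 : ⟪v, v⟫_ℝ = 1 := by
        rw [real_inner_self_eq_norm_mul_norm, hunit v hv]; norm_num
      rw [hinner] at h1
      exact h1
    set N := (V.card : ℝ) with hN
    set A := ∑ v ∈ V, ∑ w ∈ V, (∑ i, v i * w i)^2 with hA
    set B := ∑ v ∈ V, ∑ w ∈ V, (∑ i, v i * w i)^4 with hB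
    have hBA : B = α^2 * A + N * (1 - α^2) := by
      have hpt : ∀ v ∈ V, ∑ w ∈ V, ((∑ i, v i * w i)^4 - α^2 * (∑ i, v i * w i)^2)
          = 1 - α^2 := by
        intro v hv
        rw [Finset.sum_eq_single_of_mem v hv]
        · rw [hxv v hv]; ring
        · intro w hw hne
          have ht := hangle v hv w hw (Ne.symm hne)
          rw [← hinner v w]
          rcases ht with h0 | hα'
          · have h00 : ⟪v, w⟫_ℝ = 0 := abs_eq_zero.mp h0
            rw [h00]; ring
          · have h2 : ⟪v, w⟫_ℝ^2 = α^2 := by rw [← sq_abs, hα']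
            calc ⟪v, w⟫_ℝ^4 - α^2*⟪v, w⟫_ℝ^2
                = (⟪v, w⟫_ℝ^2)^2 - α^2*⟪v, w⟫_ℝ^2 := by ring
              _ = 0 := by rw [h2]; ring
      have hsum : ∑ v ∈ V, ∑ w ∈ V, ((∑ i, v i * w i)^4 - α^2 * (∑ i, v i * w i)^2)
          = N * (1 - α^2) := by
        rw [Finset.sum_congr rfl hpt, Finset.sum_const, nsmul_eq_mul]
      have hexp : ∑ v ∈ V, ∑ w ∈ V, ((∑ i, v i * w i)^4 - α^2 * (∑ i, v i * w i)^2)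
          = B - α^2 * A := by
        rw [hA, hB]
        simp only [Finset.sum_sub_distrib, Finset.mul_sum]
      rw [hexp] at hsum
      linarith
    have hI1 : 0 ≤ (n:ℝ)^2 * A - n * N^2 := by
      have h0 := swap_sq V (fun v (p : Fin n × Fin n) =>
        (n:ℝ) * (v p.1 * v p.2) + (-1) * dd p.1 p.2)
      have h1 : ∀ v ∈ V, ∀ w ∈ V,
          (∑ p : Fin n × Fin n, ((n:ℝ)*(v p.1*v p.2) + (-1)*dd p.1 p.2)
            * ((n:ℝ)*(w p.1*w p.2) + (-1)*dd p.1 p.2))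
          = (n:ℝ)^2*(∑ i, v i * w i)^2 - n := by
        intro v hv w hw
        rw [Fintype.sum_prod_type]
        rw [ker2 v w (n:ℝ) (-1) (hxv v hv) (hxv w hw)]
        ring
      calc (0:ℝ) ≤ _ := h0
        _ = ∑ v ∈ V, ∑ w ∈ V, ((n:ℝ)^2*(∑ i, v i * w i)^2 - n) :=
            Finset.sum_congr rfl fun v hv => Finset.sum_congr rfl fun w hw => h1 v hv w hw
        _ = (n:ℝ)^2 * A - n * N^2 := by
            rw [hA]
            simp only [Finset.sum_sub_distrib, ← Finset.mul_sum, Finset.sum_const, nsmul_eq_mul]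
            ring
    have hI2 : 0 ≤ (((n:ℝ)+2)*((n:ℝ)+4))^2 * B - 6*((n:ℝ)+2)^2*((n:ℝ)+4)*A
        + 3*((n:ℝ)+2)*((n:ℝ)+4)*N^2 := by
      set a : ℝ := ((n:ℝ)+2)*((n:ℝ)+4) with ha
      have h0 := swap_sq V (fun v (p : Fin n × Fin n × Fin n × Fin n) =>
        a * TT v p.1 p.2.1 p.2.2.1 p.2.2.2 + (-((n:ℝ)+2)) * PP v p.1 p.2.1 p.2.2.1 p.2.2.2
          + 1 * SS p.1 p.2.1 p.2.2.1 p.2.2.2)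
      have h1 : ∀ v ∈ V, ∀ w ∈ V,
          (∑ p : Fin n × Fin n × Fin n × Fin n,
            (a * TT v p.1 p.2.1 p.2.2.1 p.2.2.2 + (-((n:ℝ)+2)) * PP v p.1 p.2.1 p.2.2.1 p.2.2.2
              + 1 * SS p.1 p.2.1 p.2.2.1 p.2.2.2)
            * (a * TT w p.1 p.2.1 p.2.2.1 p.2.2.2 + (-((n:ℝ)+2)) * PP w p.1 p.2.1 p.2.2.1 p.2.2.2
              + 1 * SS p.1 p.2.1 p.2.2.1 p.2.2.2))
          = a^2*(∑ i, v i * w i)^4 - 6*((n:ℝ)+2)^2*((n:ℝ)+4)*(∑ i, v i * w i)^2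
            + 3*((n:ℝ)+2)*((n:ℝ)+4) := by
        intro v hv w hw
        simp only [Fintype.sum_prod_type]
        rw [ker4 v w a (-((n:ℝ)+2)) 1 (hxv v hv) (hxv w hw)]
        rw [ha]; ring
      calc (0:ℝ) ≤ _ := h0
        _ = ∑ v ∈ V, ∑ w ∈ V, (a^2*(∑ i, v i * w i)^4
              - 6*((n:ℝ)+2)^2*((n:ℝ)+4)*(∑ i, v i * w i)^2 + 3*((n:ℝ)+2)*((n:ℝ)+4)) :=
            Finset.sum_congr rfl fun v hv => Finset.sum_congr rfl fun w hw => h1 v hv w hw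
        _ = a^2 * B - 6*((n:ℝ)+2)^2*((n:ℝ)+4)*A + 3*((n:ℝ)+2)*((n:ℝ)+4)*N^2 := by
            rw [hA, hB]
            simp only [Finset.sum_sub_distrib, Finset.sum_add_distrib, ← Finset.mul_sum,
              Finset.sum_const, nsmul_eq_mul]
            ring
    rw [le_div_iff₀ hden]
    rcases Finset.eq_empty_or_nonempty V with hV | hV
    · have hN0 : N = 0 := by rw [hN, hV]; simp
      rw [hN0] at *
      have : 0 ≤ (n:ℝ)*((n:ℝ)+2)*(1-α^2) := by
        apply mul_nonneg (by positivity) (by linarith)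
      linarith
    · have hNpos : (0:ℝ) < N := by
        rw [hN]; exact_mod_cast Finset.card_pos.mpr hV
      have hI2' : 0 ≤ (((n:ℝ)+2)*((n:ℝ)+4))^2 * (α^2 * A + N * (1 - α^2))
          - 6*((n:ℝ)+2)^2*((n:ℝ)+4)*A + 3*((n:ℝ)+2)*((n:ℝ)+4)*N^2 := by
        rw [← hBA]; exact hI2
      have h64 : 0 ≤ 6 - ((n:ℝ)+4)*α^2 := by nlinarith [hden, hsq1]
      have hAlb : 0 ≤ (n:ℝ)*A - N^2 := by nlinarith [hI1, hnpos]
      have hprod : 0 ≤ (((n:ℝ)+2)^2*((n:ℝ)+4)*(6 - ((n:ℝ)+4)*α^2)) * ((n:ℝ)*A - N^2) :=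
        mul_nonneg (mul_nonneg (by positivity) h64) hAlb
      have hE2n : 0 ≤ (n:ℝ) * ((((n:ℝ)+2)*((n:ℝ)+4))^2 * (α^2 * A + N * (1 - α^2))
          - 6*((n:ℝ)+2)^2*((n:ℝ)+4)*A + 3*((n:ℝ)+2)*((n:ℝ)+4)*N^2) :=
        mul_nonneg hnpos.le hI2'
      have key : ((n:ℝ)+2)*((n:ℝ)+4)^2 * (N^2 * (3 - ((n:ℝ)+2)*α^2))
          ≤ ((n:ℝ)+2)*((n:ℝ)+4)^2 * ((n:ℝ)*((n:ℝ)+2)*N*(1-α^2)) := by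
        linarith [hE2n, hprod]
      have key2 : N^2*(3 - ((n:ℝ)+2)*α^2) ≤ (n:ℝ)*((n:ℝ)+2)*N*(1-α^2) :=
        le_of_mul_le_mul_left key (by positivity)
      have key3 : (N*(3 - ((n:ℝ)+2)*α^2)) * N ≤ ((n:ℝ)*((n:ℝ)+2)*(1-α^2)) * N := by
        nlinarith [key2]
      have := le_of_mul_le_mul_right key3 hNpos
      linarith
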